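/- arXiv:2005.09798 — 2 statements merged into one kernel-verified Lean document; each statement's English description precedes it below -/
import Mathlib

section
/- If G₁ and G₂ are nontrivial finite groups that each admit a DRR, and gcd(|G₁|, |G₂|) = 1, then the direct product G₁ × G₂ is not DRR-detecting. -/
/-! Common definitions: Cayley digraphs, digraph automorphism groups,
DRRs/GRRs, detecting groups, the regular representation, the group `W(G,N)`,
wreath and cartesian products of digraphs, and the wreath product of groups. -/

universe u

/-- The adjacency relation of the Cayley digraph `Cay(G,S)`:
there is a directed edge from `g₁` to `g₂` iff `g₂ = s * g₁` for some `s ∈ S`. -/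
def cayAdj {G : Type*} [Group G] (S : Set G) : G → G → Prop :=
  fun g₁ g₂ => ∃ s ∈ S, g₂ = s * g₁

/-- The automorphism group of a digraph (given by its adjacency relation),
as a subgroup of the symmetric group on the vertices. -/
def digraphAut {V : Type*} (Adj : V → V → Prop) : Subgroup (Equiv.Perm V) where
  carrier := {σ | ∀ x y, Adj (σ x) (σ y) ↔ Adj x y}
  one_mem' := fun _ _ => Iff.rfl
  mul_mem' := by
    intro σ τ hσ hτ x y
    simp only [Equiv.Perm.mul_apply]
    exact (hσ _ _).trans (hτ _ _)
  inv_mem' := by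
    intro σ hσ x y
    have h := (hσ (σ⁻¹ x) (σ⁻¹ y)).symm
    simpa using h

/-- A digraph is a DRR (digraphical regular representation) of the group `G` if its
automorphism group is isomorphic to `G` and acts regularly on the vertex set. -/
def IsDRR (G : Type*) [Group G] {V : Type*} (Adj : V → V → Prop) : Prop :=
  Nonempty (digraphAut Adj ≃* G) ∧
    ∀ v w : V, ∃! σ : digraphAut Adj, (σ : Equiv.Perm V) v = w

/-- A GRR (graphical regular representation) of `G` is a DRR that is a graph. -/
def IsGRR (G : Type*) [Group G] {V : Type*} (Adj : V → V → Prop) : Prop :=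
  Symmetric Adj ∧ IsDRR G Adj

/-- `Aut(G,S)` is trivial: the only group automorphism `φ` of `G` with `φ(S) = S`
is the identity. -/
def AutGSTrivial {G : Type*} [Group G] (S : Set G) : Prop :=
  ∀ φ : MulAut G, ⇑φ '' S = S → φ = 1

/-- `G` is DRR-detecting: for every `S ⊆ G`, if `Aut(G,S) = 1` then
`Cay(G,S)` is a DRR of `G`. -/
def DRRDetecting (G : Type*) [Group G] : Prop :=
  ∀ S : Set G, AutGSTrivial S → IsDRR G (cayAdj S)

/-- `G` is GRR-detecting: for every inverse-closed `S ⊆ G`, if `Aut(G,S) = 1` then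
`Cay(G,S)` is a GRR of `G`. -/
def GRRDetecting (G : Type*) [Group G] : Prop :=
  ∀ S : Set G, (∀ s ∈ S, s⁻¹ ∈ S) → AutGSTrivial S → IsGRR G (cayAdj S)

/-- `G` admits a DRR (equivalently, some Cayley digraph of `G` is a DRR). -/
def HasDRR (G : Type*) [Group G] : Prop :=
  ∃ S : Set G, IsDRR G (cayAdj S)

/-- `G` admits a GRR (equivalently, some Cayley graph of `G` is a GRR). -/
def HasGRR (G : Type*) [Group G] : Prop :=
  ∃ S : Set G, (∀ s ∈ S, s⁻¹ ∈ S) ∧ IsGRR G (cayAdj S)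

/-- The right regular representation `Ĝ = {x ↦ x·g : g ∈ G}` of `G`,
as a subgroup of the symmetric group on `G`. -/
def regularRep (G : Type*) [Group G] : Subgroup (Equiv.Perm G) where
  carrier := {σ | ∃ g : G, ∀ x, σ x = x * g}
  one_mem' := ⟨1, fun x => (mul_one x).symm⟩
  mul_mem' := by
    rintro σ τ ⟨g, hg⟩ ⟨h, hh⟩
    exact ⟨h * g, fun x => by
      simp only [Equiv.Perm.mul_apply, hg, hh, mul_assoc]⟩
  inv_mem' := by
    rintro σ ⟨g, hg⟩
    refine ⟨g⁻¹, fun x => ?_⟩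
    have h1 : σ (x * g⁻¹) = x := by rw [hg]; group
    calc σ⁻¹ x = σ⁻¹ (σ (x * g⁻¹)) := by rw [h1]
      _ = x * g⁻¹ := by simp

/-- The set `W(G,N)` of all permutations `φ_{c,f} : x ↦ x·c·f(x̄)` of `G`,
where `c ∈ G` and `f : G/N → N`. -/
def Wset (G : Type*) [Group G] (N : Subgroup G) [N.Normal] : Set (Equiv.Perm G) :=
  {σ | ∃ (c : G) (f : G ⧸ N → G), (∀ q, f q ∈ N) ∧
      ∀ x : G, σ x = x * c * f (QuotientGroup.mk x)}

/-- The wreath product `X ≀ Y` of two digraphs. -/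
def wreathAdj {X Y : Type*} (A : X → X → Prop) (B : Y → Y → Prop) :
    X × Y → X × Y → Prop :=
  fun p q => A p.1 q.1 ∨ (p.1 = q.1 ∧ B p.2 q.2)

/-- The cartesian product `X □ Y` of two digraphs. -/
def cartAdj {X Y : Type*} (A : X → X → Prop) (B : Y → Y → Prop) :
    X × Y → X × Y → Prop :=
  fun p q => (p.1 = q.1 ∧ B p.2 q.2) ∨ (p.2 = q.2 ∧ A p.1 q.1)

/-- A digraph is prime with respect to the cartesian product if it has more than one
vertex and is not isomorphic to a cartesian product of two digraphs,
each with more than one vertex. -/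
def IsPrimeDigraph {V : Type u} (Adj : V → V → Prop) : Prop :=
  (∃ x y : V, x ≠ y) ∧
    ¬ ∃ (X Y : Type u) (A : X → X → Prop) (B : Y → Y → Prop) (e : V ≃ X × Y),
        (∃ x₁ x₂ : X, x₁ ≠ x₂) ∧ (∃ y₁ y₂ : Y, y₁ ≠ y₂) ∧
          ∀ v w : V, Adj v w ↔ cartAdj A B (e v) (e w)

/-- A digraph is weakly connected if any two vertices are joined by a path in the
underlying undirected graph. -/
def WeaklyConnected {V : Type*} (Adj : V → V → Prop) : Prop :=
  ∀ x y : V, Relation.ReflTransGen (fun a b => Adj a b ∨ Adj b a) x y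

/-- Translation of coordinates: the automorphism `v ↦ (x ↦ v (x * q))`
of the group `Q → N`. -/
def transAut {Q N : Type*} [Group Q] [Group N] (q : Q) : (Q → N) ≃* (Q → N) where
  toFun v := fun x => v (x * q)
  invFun v := fun x => v (x * q⁻¹)
  left_inv v := funext fun x => by simp [mul_assoc]
  right_inv v := funext fun x => by simp [mul_assoc]
  map_mul' v w := rfl

/-- The action of `Q` on `Q → N` by translating coordinates, as a homomorphism
`Q →* MulAut (Q → N)`. -/
def transHom (Q N : Type*) [Group Q] [Group N] : Q →* MulAut (Q → N) where
  toFun := transAut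
  map_one' := by
    ext v x
    simp [transAut]
  map_mul' q₁ q₂ := by
    ext v x
    simp [transAut, mul_assoc, MulAut.mul_apply]

/-- The wreath product `Q ≀ N` of two groups: the semidirect product
`N^Q ⋊ Q`, with `Q` acting on `N^Q` by translating the coordinates. -/
abbrev WreathProd (Q N : Type*) [Group Q] [Group N] :=
  SemidirectProduct (Q → N) Q (transHom Q N)

/-!
Let `Cay(G₁, S₁)` and `Cay(G₂, S₂)` be DRRs, so `Aut(Gᵢ, Sᵢ) = 1`; this survives removing `1`
from `S₁`, so we may assume `1 ∉ S₁`. The connection set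
`S = (S₁ × G₂) ∪ ({1} × S₂)` makes `Cay(G₁ × G₂, S)` the wreath product
`Cay(G₁, S₁) ≀ Cay(G₂, S₂)`. Since the orders are coprime, every automorphism of `G₁ × G₂` is a
product `ψ₁ × ψ₂`, and it preserves `S` only if each `ψᵢ` preserves `Sᵢ`; so `Aut(G₁ × G₂, S) = 1`.
But a wreath product `X ≀ Y` admits every automorphism `(x, y) ↦ (x, β x y)` with `β x ∈ Aut(Y)`,
and for `|X| ≥ 2` and `Aut(Y) ≠ 1` (here: right translations of `G₂`) some of them fix a vertex
without being the identity.
-/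

theorem Function.Bijective.image_eq_self_iff {α : Type*} {f : α → α} (hf : Function.Bijective f)
    {S : Set α} : f '' S = S ↔ ∀ x, f x ∈ S ↔ x ∈ S := by
  rw [Set.ext_iff, hf.surjective.forall]
  simp only [hf.injective.mem_set_image]
  exact forall_congr' fun _ => Iff.comm

theorem MonoidHom.eq_one_of_coprime_natCard {H K : Type*} [Group H] [Group K] (f : H →* K)
    (h : (Nat.card H).Coprime (Nat.card K)) : f = 1 := by
  ext x
  have hH : orderOf (f x) ∣ Nat.card H := (orderOf_map_dvd f x).trans (orderOf_dvd_natCard x)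
  exact orderOf_eq_one_iff.1 (Nat.eq_one_of_dvd_coprimes h hH (orderOf_dvd_natCard _))

theorem MulAut.exists_eq_prodCongr_of_coprime {G₁ G₂ : Type*} [Group G₁] [Group G₂]
    (h : (Nat.card G₁).Coprime (Nat.card G₂)) (φ : MulAut (G₁ × G₂)) :
    ∃ (ψ₁ : MulAut G₁) (ψ₂ : MulAut G₂), φ = MulEquiv.prodCongr ψ₁ ψ₂ := by
  have map_inl (f : MulAut (G₁ × G₂)) (a : G₁) : f (a, 1) = ((f (a, 1)).1, 1) :=
    Prod.ext rfl <| DFunLike.congr_fun ((MonoidHom.snd _ _).comp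
      (f.toMonoidHom.comp (MonoidHom.inl _ _)) |>.eq_one_of_coprime_natCard h) a
  have map_inr (f : MulAut (G₁ × G₂)) (b : G₂) : f (1, b) = (1, (f (1, b)).2) :=
    Prod.ext (DFunLike.congr_fun ((MonoidHom.fst _ _).comp
      (f.toMonoidHom.comp (MonoidHom.inr _ _)) |>.eq_one_of_coprime_natCard h.symm) b) rfl
  let ψ₁ : MulAut G₁ := MonoidHom.toMulEquiv
    ((MonoidHom.fst _ _).comp (φ.toMonoidHom.comp (MonoidHom.inl _ _)))
    ((MonoidHom.fst _ _).comp (φ.symm.toMonoidHom.comp (MonoidHom.inl _ _)))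
    (by ext a; simp [← map_inl φ])
    (by ext a; simp [← map_inl φ.symm])
  let ψ₂ : MulAut G₂ := MonoidHom.toMulEquiv
    ((MonoidHom.snd _ _).comp (φ.toMonoidHom.comp (MonoidHom.inr _ _)))
    ((MonoidHom.snd _ _).comp (φ.symm.toMonoidHom.comp (MonoidHom.inr _ _)))
    (by ext b; simp [← map_inr φ])
    (by ext b; simp [← map_inr φ.symm])
  refine ⟨ψ₁, ψ₂, MulEquiv.ext fun ⟨a, b⟩ => ?_⟩
  calc φ (a, b) = φ (a, 1) * φ (1, b) := by rw [← map_mul, Prod.mk_mul_mk, mul_one, one_mul]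
    _ = (ψ₁ a, ψ₂ b) := by
      rw [map_inl φ, map_inr φ, Prod.mk_mul_mk, mul_one, one_mul]
      rfl

theorem cayAdj_iff {G : Type*} [Group G] {S : Set G} {x y : G} :
    cayAdj S x y ↔ y * x⁻¹ ∈ S :=
  ⟨fun ⟨s, hs, h⟩ => by simpa [h] using hs, fun h => ⟨y * x⁻¹, h, by group⟩⟩

theorem mulRight_mem_digraphAut_cayAdj {G : Type*} [Group G] (S : Set G) (g : G) :
    Equiv.mulRight g ∈ digraphAut (cayAdj S) := fun x y => by
  rw [cayAdj_iff, cayAdj_iff, Equiv.coe_mulRight, mul_inv_rev, mul_assoc, mul_inv_cancel_left]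

theorem IsDRR.eq_one_of_apply_eq {H V : Type*} [Group H] {Adj : V → V → Prop}
    (hDRR : IsDRR H Adj) {σ : Equiv.Perm V} (hσ : σ ∈ digraphAut Adj) {v : V} (hv : σ v = v) :
    σ = 1 := by
  obtain ⟨τ, -, huniq⟩ := hDRR.2 v v
  exact congrArg Subtype.val ((huniq ⟨σ, hσ⟩ hv).trans (huniq 1 rfl).symm)

theorem IsDRR.autGSTrivial {H G : Type*} [Group H] [Group G] {S : Set G}
    (hDRR : IsDRR H (cayAdj S)) : AutGSTrivial S := by
  intro φ hφ
  have hmem : φ.toEquiv ∈ digraphAut (cayAdj S) := fun x y => by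
    rw [cayAdj_iff, cayAdj_iff]
    change φ y * (φ x)⁻¹ ∈ S ↔ _
    rw [← map_inv, ← map_mul]
    exact φ.bijective.image_eq_self_iff.1 hφ _
  ext x
  exact Equiv.ext_iff.1 (hDRR.eq_one_of_apply_eq hmem (map_one φ)) x

theorem AutGSTrivial.diff_one {G : Type*} [Group G] {S : Set G} (h : AutGSTrivial S) :
    AutGSTrivial (S \ {1}) := by
  intro φ hφ
  refine h φ (φ.bijective.image_eq_self_iff.2 fun x => ?_)
  by_cases hx : x = 1
  · simp [hx]
  · simpa [hx] using φ.bijective.image_eq_self_iff.1 hφ x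

section Wreath

variable {G₁ G₂ : Type*} [Group G₁] [Group G₂]

def wreathSet (S₁ : Set G₁) (S₂ : Set G₂) : Set (G₁ × G₂) :=
  {p | p.1 ∈ S₁ ∨ (p.1 = 1 ∧ p.2 ∈ S₂)}

theorem cayAdj_wreathSet (S₁ : Set G₁) (S₂ : Set G₂) :
    cayAdj (wreathSet S₁ S₂) = wreathAdj (cayAdj S₁) (cayAdj S₂) := by
  ext p q
  simp only [cayAdj_iff, wreathSet, wreathAdj, Set.mem_ofPred_eq, Prod.fst_mul, Prod.snd_mul,
    Prod.fst_inv, Prod.snd_inv, mul_inv_eq_one, eq_comm]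

theorem autGSTrivial_wreathSet (hco : (Nat.card G₁).Coprime (Nat.card G₂)) {S₁ : Set G₁}
    {S₂ : Set G₂} (h1 : (1 : G₁) ∉ S₁) (hS₁ : AutGSTrivial S₁) (hS₂ : AutGSTrivial S₂) :
    AutGSTrivial (wreathSet S₁ S₂) := by
  intro φ hφ
  obtain ⟨ψ₁, ψ₂, rfl⟩ := MulAut.exists_eq_prodCongr_of_coprime hco φ
  have hS (p : G₁ × G₂) : (ψ₁ p.1, ψ₂ p.2) ∈ wreathSet S₁ S₂ ↔ p ∈ wreathSet S₁ S₂ :=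
    (MulEquiv.prodCongr ψ₁ ψ₂).bijective.image_eq_self_iff.1 hφ p
  have hψ₁ : ψ₁ = 1 := hS₁ ψ₁ <| ψ₁.bijective.image_eq_self_iff.2 fun a => by
    by_cases ha : a = 1
    · simp [ha, h1]
    · simpa [wreathSet, ha] using hS (a, 1)
  have hψ₂ : ψ₂ = 1 := hS₂ ψ₂ <| ψ₂.bijective.image_eq_self_iff.2 fun b => by
    simpa [wreathSet, h1] using hS (1, b)
  subst hψ₁ hψ₂
  rfl

end Wreath

theorem prodShear_mem_digraphAut_wreathAdj {X Y : Type*} (A : X → X → Prop)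
    {B : Y → Y → Prop} (β : X → Equiv.Perm Y) (hβ : ∀ x, β x ∈ digraphAut B) :
    Equiv.prodShear (Equiv.refl X) β ∈ digraphAut (wreathAdj A B) := by
  rintro ⟨x, y⟩ ⟨x', y'⟩
  refine or_congr Iff.rfl (and_congr_right fun hx => ?_)
  subst hx
  exact hβ x y y'

theorem not_isDRR_wreathAdj {H X Y : Type*} [Group H] [Nontrivial X] (A : X → X → Prop)
    {B : Y → Y → Prop} {β : Equiv.Perm Y} (hβ : β ∈ digraphAut B) (hβ1 : β ≠ 1) :
    ¬ IsDRR H (wreathAdj A B) := by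
  classical
  intro hDRR
  obtain ⟨x₀, x₁, hx⟩ := exists_pair_ne X
  obtain ⟨y, hy⟩ : ∃ y, β y ≠ y := by
    by_contra! h
    exact hβ1 (Equiv.ext h)
  have hσ := prodShear_mem_digraphAut_wreathAdj A (Pi.mulSingle x₁ β) fun x => by
    by_cases h : x = x₁
    · simpa [h] using hβ
    · simp [h]
  have hσ1 := hDRR.eq_one_of_apply_eq hσ (v := (x₀, y)) (by simp [Pi.mulSingle_eq_of_ne hx])
  exact hy (by simpa using congrArg Prod.snd (Equiv.ext_iff.1 hσ1 (x₁, y)))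

/-- If `G₁` and `G₂` are nontrivial finite groups that each admit a DRR
and `gcd(|G₁|,|G₂|) = 1`, then `G₁ × G₂` is not DRR-detecting. -/
theorem directProduct_coprime_not_DRRDetecting {G₁ G₂ : Type*} [Group G₁] [Group G₂]
    [Fintype G₁] [Fintype G₂] [Nontrivial G₁] [Nontrivial G₂]
    (h₁ : HasDRR G₁) (h₂ : HasDRR G₂)
    (hco : Nat.gcd (Fintype.card G₁) (Fintype.card G₂) = 1) :
    ¬ DRRDetecting (G₁ × G₂) := by
  intro hdet
  obtain ⟨S₁, hS₁⟩ := h₁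
  obtain ⟨S₂, hS₂⟩ := h₂
  have hco' : (Nat.card G₁).Coprime (Nat.card G₂) := by
    simpa only [Nat.card_eq_fintype_card] using hco
  have hAut : AutGSTrivial (wreathSet (S₁ \ {1}) S₂) :=
    autGSTrivial_wreathSet hco' (fun h => h.2 rfl) hS₁.autGSTrivial.diff_one hS₂.autGSTrivial
  have hDRR := hdet _ hAut
  rw [cayAdj_wreathSet] at hDRR
  obtain ⟨g, hg⟩ := exists_ne (1 : G₂)
  refine not_isDRR_wreathAdj _ (mulRight_mem_digraphAut_cayAdj S₂ g) (fun h => hg ?_) hDRR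
  simpa using Equiv.ext_iff.1 h 1
end

section
/- Let N be a normal subgroup of a finite group G with Z(N) ≤ Z(G), let Ĝ be the right regular representation of G, and let Z¹(G/N, Z(N)) be the set of maps f : G/N → Z(N) satisfying f(ḡ·h̄) = (f(ḡ))^{h̄} · f(h̄) for all ḡ, h̄ ∈ G/N, where the action of G/N on Z(N) is induced by conjugation in G. Then the normalizer of Ĝ in W(G,N) equals {φ_{c,f} : c ∈ G, f ∈ Z¹(G/N, Z(N))}. -/
/-! Common definitions: Cayley digraphs, digraph automorphism groups,
DRRs/GRRs, detecting groups, the regular representation, the group `W(G,N)`,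
wreath and cartesian products of digraphs, and the wreath product of groups. -/

universe u

/-! A permutation `σ` of `G` normalizes the right regular representation exactly when
`x ↦ σ(1)⁻¹ σ(x)` is a homomorphism, because then `σ ρ_g σ⁻¹ = ρ_{σ(1)⁻¹ σ(g)}` for the
right translations `ρ_g : x ↦ x g`.
For `σ = φ_{c,f}` normalized by `f(1) = 1`, this homomorphism is `x ↦ (c⁻¹ x c) f(x̄)`.
Evaluating it on `x · n` with `n ∈ N` (where `f(x̄n̄) = f(x̄)` and `f(n̄) = 1`) shows that `f` takes values in `Z(N) ≤ Z(G)`; once the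
values are central, the homomorphism property is just multiplicativity of `f`, which for
central values is the cocycle identity. -/

section RegularRep

variable {G : Type*} [Group G]

lemma mem_normalizer_regularRep_iff (σ : Equiv.Perm G) :
    σ ∈ Subgroup.normalizer (regularRep G) ↔ ∀ x y, σ (x * y) = σ x * (σ 1)⁻¹ * σ y := by
  rw [Subgroup.mem_normalizer_iff]
  constructor
  · intro hσ x y
    obtain ⟨k, hk⟩ := (hσ (Equiv.mulRight y)).1 ⟨y, fun _ => rfl⟩
    have hk' : ∀ z, σ (σ.symm z * y) = z * k := by simpa using hk
    have hx := hk' (σ x)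
    have h1 := hk' (σ 1)
    simp only [Equiv.symm_apply_apply, one_mul] at hx h1
    rw [hx, h1]
    group
  · intro hσ τ
    have conj_mulRight : ∀ g, σ * Equiv.mulRight g * σ⁻¹ = Equiv.mulRight ((σ 1)⁻¹ * σ g) := by
      intro g
      ext z
      simp [hσ, mul_assoc]
    constructor
    · rintro ⟨g, hg⟩
      obtain rfl : τ = Equiv.mulRight g := Equiv.ext hg
      rw [conj_mulRight]
      exact ⟨_, fun _ => rfl⟩
    · rintro ⟨k, hk⟩
      obtain ⟨g, hg⟩ := σ.surjective (σ 1 * k)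
      have hτ : σ * τ * σ⁻¹ = σ * Equiv.mulRight g * σ⁻¹ := by
        rw [conj_mulRight, hg, inv_mul_cancel_left]
        exact Equiv.ext hk
      rw [mul_left_inj, mul_right_inj] at hτ
      exact ⟨g, by simp [hτ]⟩

end RegularRep

section Wset

variable {G : Type*} [Group G] {N : Subgroup G} {σ : Equiv.Perm G} {c : G} {f : G ⧸ N → G}

lemma mem_center_of_commute (hZ : ∀ n : ↥N, n ∈ Subgroup.center ↥N → (n : G) ∈ Subgroup.center G)
    {z : G} (hzN : z ∈ N) (hz : ∀ m ∈ N, z * m = m * z) : z ∈ Subgroup.center G :=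
  hZ ⟨z, hzN⟩ <| Subgroup.mem_center_iff.2 fun m => Subtype.ext (hz m m.2).symm

lemma cocycle_iff_map_mul (hcen : ∀ q, f q ∈ Subgroup.center G) {g h : G} :
    f (g * h : G) = h⁻¹ * f g * h * f h ↔ f (g * h : G) = f g * f h := by
  have hconj : h⁻¹ * f g * h = f g := by
    rw [mul_assoc, ← Subgroup.mem_center_iff.1 (hcen g) h, inv_mul_cancel_left]
  rw [hconj]

variable [N.Normal]

lemma commute_of_mem_normalizer_regularRep
    (hσ : ∀ x, σ x = x * c * f x) (hf1 : f 1 = 1) (hnorm : σ ∈ Subgroup.normalizer (regularRep G))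
    (q : G ⧸ N) : ∀ m ∈ N, f q * m = m * f q := by
  intro m hm
  obtain ⟨x, rfl⟩ := QuotientGroup.mk_surjective q
  have hcm : ((c * m * c⁻¹ : G) : G ⧸ N) = 1 :=
    (QuotientGroup.eq_one_iff _).2 (Subgroup.Normal.conj_mem ‹_› m hm c)
  have h := (mem_normalizer_regularRep_iff σ).1 hnorm x (c * m * c⁻¹)
  simp only [hσ, QuotientGroup.mk_mul, hcm, QuotientGroup.mk_one, mul_one, one_mul, hf1] at h
  calc f x * m = (x * c)⁻¹ * (x * c * f x * c⁻¹ * (c * m * c⁻¹ * c)) := by group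
    _ = (x * c)⁻¹ * (x * (c * m * c⁻¹) * c * f x) := by rw [h]
    _ = m * f x := by group

lemma mem_normalizer_regularRep_iff_map_mul
    (hσ : ∀ x, σ x = x * c * f x) (hf1 : f 1 = 1) (hcen : ∀ q, f q ∈ Subgroup.center G) :
    σ ∈ Subgroup.normalizer (regularRep G) ↔ ∀ x y : G, f (x * y : G) = f x * f y := by
  have hprod : ∀ x y : G, σ x * (σ 1)⁻¹ * σ y = x * y * c * (f x * f y) := by
    intro x y
    have hfx := Subgroup.mem_center_iff.1 (hcen x) (c⁻¹ * y * c)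
    simp only [hσ, QuotientGroup.mk_one, hf1, mul_one, one_mul]
    calc x * c * f x * c⁻¹ * (y * c * f y)
        = x * c * (f x * (c⁻¹ * y * c)) * f y := by group
      _ = x * y * c * (f x * f y) := by rw [← hfx]; group
  rw [mem_normalizer_regularRep_iff]
  refine forall₂_congr fun x y => ?_
  rw [hprod, hσ, mul_right_inj]

end Wset

theorem normalizer_regularRep_in_Wset_eq_cocycles_general {G : Type*} [Group G]
    (N : Subgroup G) [N.Normal]
    (hZ : ∀ n : ↥N, n ∈ Subgroup.center ↥N → (n : G) ∈ Subgroup.center G) :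
    {σ : Equiv.Perm G | σ ∈ Wset G N ∧ σ ∈ Subgroup.normalizer (regularRep G)} =
      {σ : Equiv.Perm G | ∃ (c : G) (f : G ⧸ N → G),
        (∀ q, f q ∈ N) ∧
        (∀ q, ∀ m ∈ N, f q * m = m * f q) ∧
        (∀ g h : G, f (QuotientGroup.mk (g * h)) =
            h⁻¹ * f (QuotientGroup.mk g) * h * f (QuotientGroup.mk h)) ∧
        ∀ x : G, σ x = x * c * f (QuotientGroup.mk x)} := by
  ext σ
  constructor
  · rintro ⟨⟨c, f, hfN, hσ⟩, hnorm⟩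
    set f' : G ⧸ N → G := fun q => (f 1)⁻¹ * f q
    have hσ' : ∀ x, σ x = x * (c * f 1) * f' x := fun x => by rw [hσ]; simp only [f']; group
    have hf'N : ∀ q, f' q ∈ N := fun q => N.mul_mem (N.inv_mem (hfN 1)) (hfN q)
    have hf'1 : f' 1 = 1 := inv_mul_cancel _
    have hcomm := commute_of_mem_normalizer_regularRep hσ' hf'1 hnorm
    have hcen q := mem_center_of_commute hZ (hf'N q) (hcomm q)
    have hmul := (mem_normalizer_regularRep_iff_map_mul hσ' hf'1 hcen).1 hnorm
    exact ⟨c * f 1, f', hf'N, hcomm, fun g h => (cocycle_iff_map_mul hcen).2 (hmul g h), hσ'⟩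
  · rintro ⟨c, f, hfN, hcomm, hcoc, hσ⟩
    have hcen q := mem_center_of_commute hZ (hfN q) (hcomm q)
    have hmul g h := (cocycle_iff_map_mul hcen).1 (hcoc g h)
    have hf1 : f 1 = 1 := by simpa using hmul 1 1
    exact ⟨⟨c, f, hfN, hσ⟩, (mem_normalizer_regularRep_iff_map_mul hσ hf1 hcen).2 hmul⟩

/-- If `Z(N) ≤ Z(G)`, the normalizer of `Ĝ` in `W(G,N)` is exactly
`{φ_{c,f} : c ∈ G, f ∈ Z¹(G/N, Z(N))}`, where `Z¹(G/N, Z(N))` is the set of crossed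
homomorphisms (`1`-cocycles) `f : G/N → Z(N)` for the conjugation action. -/
theorem normalizer_regularRep_in_Wset_eq_cocycles {G : Type*} [Group G] [Fintype G]
    (N : Subgroup G) [N.Normal]
    (hZ : ∀ n : ↥N, n ∈ Subgroup.center ↥N → (n : G) ∈ Subgroup.center G) :
    {σ : Equiv.Perm G | σ ∈ Wset G N ∧ σ ∈ Subgroup.normalizer (regularRep G)} =
      {σ : Equiv.Perm G | ∃ (c : G) (f : G ⧸ N → G),
        (∀ q, f q ∈ N) ∧
        (∀ q, ∀ m ∈ N, f q * m = m * f q) ∧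
        (∀ g h : G, f (QuotientGroup.mk (g * h)) =
            h⁻¹ * f (QuotientGroup.mk g) * h * f (QuotientGroup.mk h)) ∧
        ∀ x : G, σ x = x * c * f (QuotientGroup.mk x)} :=
  normalizer_regularRep_in_Wset_eq_cocycles_general N hZ
end
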